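/- For all integers t ≥ s ≥ 2 and r ≥ s+1, the r-expansion K^{(r)}_{s,t} of the complete bipartite graph K_{s,t} is a spanning subgraph of a tight r-tree. -/

import Mathlib

open Finset Filter

section Defs

variable {α β : Type*}

/-- `H` is `r`-uniform: every edge has exactly `r` vertices. -/
def IsUniform (r : ℕ) (H : Finset (Finset α)) : Prop := ∀ e ∈ H, e.card = r

/-- The vertex set (support) of a hypergraph given by its edge set. -/
def verts [DecidableEq α] (H : Finset (Finset α)) : Finset α := H.sup id

/-- The degree of a set `S` of vertices in `H`: the number of edges containing `S`. -/
def degOf [DecidableEq α] (H : Finset (Finset α)) (S : Finset α) : ℕ :=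
  (H.filter fun e => S ⊆ e).card

/-- `Δ_i(H)`: the maximum degree over vertex sets of size `i`. -/
def maxDeg [DecidableEq α] (H : Finset (Finset α)) (i : ℕ) : ℕ :=
  ((verts H).powersetCard i).sup fun S => degOf H S

/-- `c` is the set of edges of a copy of `F` inside `H`. -/
def IsCopy [DecidableEq β] [DecidableEq α] (F : Finset (Finset β)) (H : Finset (Finset α))
    (c : Finset (Finset α)) : Prop :=
  ∃ φ : β → α, Set.InjOn φ ↑(verts F) ∧ (∀ e ∈ F, e.image φ ∈ H) ∧
    c = F.image fun e => e.image φ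

/-- `H` contains no copy of `F`. -/
def IsFree [DecidableEq β] [DecidableEq α] (F : Finset (Finset β)) (H : Finset (Finset α)) :
    Prop :=
  ∀ c, ¬ IsCopy F H c

/-- The Turán number `ex(n, F)` over `r`-uniform host graphs on `n` vertices. -/
noncomputable def exTuran [DecidableEq β] (r n : ℕ) (F : Finset (Finset β)) : ℕ :=
  sSup {m : ℕ | ∃ H : Finset (Finset (Fin n)), IsUniform r H ∧ IsFree F H ∧ H.card = m}

/-- The relative Turán number `ex(G, F)`: the largest number of edges of an `F`-free
subgraph of `G`. -/
noncomputable def exIn [DecidableEq β] [DecidableEq α] (F : Finset (Finset β))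
    (G : Finset (Finset α)) : ℕ :=
  sSup {m : ℕ | ∃ H ⊆ G, IsFree F H ∧ H.card = m}

/-- `F` is `(M, γ, τ)`-balanced: every `n`-vertex `m`-edge `r`-graph `H` with `n`
sufficiently large and `m ≥ M(n)` carries a nonempty collection `𝓗` of copies of `F`
with `Δ_i(𝓗) ≤ (γ(n)|𝓗|/m) (τ(n,m)/m)^(i-1)` for `1 ≤ i ≤ |F|`. -/
def IsBalanced [DecidableEq β] (r : ℕ) (F : Finset (Finset β)) (M γ : ℕ → ℝ)
    (τ : ℝ → ℝ → ℝ) : Prop :=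
  ∃ N : ℕ, ∀ n : ℕ, N ≤ n → ∀ m : ℕ, M n ≤ (m : ℝ) →
    ∀ H : Finset (Finset (Fin n)), IsUniform r H → H.card = m →
      ∃ 𝓗 : Finset (Finset (Finset (Fin n))), 𝓗.Nonempty ∧ (∀ c ∈ 𝓗, IsCopy F H c) ∧
        ∀ i : ℕ, 1 ≤ i → i ≤ F.card →
          (maxDeg 𝓗 i : ℝ) ≤ γ n * 𝓗.card / m * (τ n m / m) ^ (i - 1)

/-- The `r`-expansion `F^{(r)}`: insert `r - r₀` fresh vertices into each edge,
all distinct from each other and from the original vertices. -/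
def expansion [DecidableEq β] (r : ℕ) (F : Finset (Finset β)) :
    Finset (Finset (β ⊕ (Finset β × ℕ))) :=
  F.image fun e =>
    e.image Sum.inl ∪ (Finset.range (r - e.card)).image fun k => Sum.inr (e, k)

/-- `T` is a tight `r`-tree: its edges can be ordered so that each new edge consists of a
brand new vertex together with an `(r-1)`-subset of an earlier edge. -/
def IsTightTree [DecidableEq α] (r : ℕ) (T : Finset (Finset α)) : Prop :=
  IsUniform r T ∧ ∃ l : List (Finset α), l.Nodup ∧ l.toFinset = T ∧
    ∀ (i : ℕ) (hi : i < l.length), 1 ≤ i →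
      ∃ v ∈ l.get ⟨i, hi⟩, v ∉ (l.take i).foldr (· ∪ ·) ∅ ∧
        ∃ (s : ℕ) (hs : s < l.length), s < i ∧ (l.get ⟨i, hi⟩).erase v ⊆ l.get ⟨s, hs⟩

/-- `F` is a spanning subgraph of a tight `r`-tree. -/
def IsSpanningSubgraphOfTightTree [DecidableEq α] (r : ℕ) (F : Finset (Finset α)) : Prop :=
  ∃ T : Finset (Finset α), IsTightTree r T ∧ F ⊆ T ∧ verts T = verts F

/-- The `k`-shadow of a hypergraph: all `k`-sets contained in some edge. -/
def kshadow [DecidableEq α] (k : ℕ) (T : Finset (Finset α)) : Finset (Finset α) :=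
  T.sup fun e => e.powersetCard k

/-- The `r`-density `d_r(F)` of a hypergraph with at least two edges. -/
noncomputable def density [DecidableEq β] (r : ℕ) (F : Finset (Finset β)) : ℝ :=
  sSup {x : ℝ | ∃ F' ∈ F.powerset, 2 ≤ F'.card ∧
    x = ((F'.card : ℝ) - 1) / ((verts F').card - r)}

open scoped Classical in
/-- The probability that the binomial random `r`-graph `G^r_{n,p}` lies in the event `E`. -/
noncomputable def probRandom (n r : ℕ) (p : ℝ) (E : Finset (Finset (Fin n)) → Prop) : ℝ :=
  ∑ G ∈ ((Finset.univ : Finset (Fin n)).powersetCard r).powerset,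
    if E G then
      p ^ G.card * (1 - p) ^ (((Finset.univ : Finset (Fin n)).powersetCard r).card - G.card)
    else 0

/-- The events `E n` hold asymptotically almost surely in `G^r_{n, p n}`. -/
def AAS (r : ℕ) (p : ℕ → ℝ) (E : ∀ n : ℕ, Finset (Finset (Fin n)) → Prop) : Prop :=
  Tendsto (fun n => probRandom n r (p n) (E n)) atTop (nhds 1)

/-- `f ≪ g`, i.e. `f n / g n → 0`. -/
def SmallO (f g : ℕ → ℝ) : Prop := Tendsto (fun n => f n / g n) atTop (nhds 0)

/-- The complete bipartite graph `K_{s,t}` as a `2`-graph. -/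
def completeBipartite (s t : ℕ) : Finset (Finset (Fin s ⊕ Fin t)) :=
  (Finset.univ : Finset (Fin s × Fin t)).image fun vw => {Sum.inl vw.1, Sum.inr vw.2}

/-- The `j`-th vertex on the `i`-th path of the theta graph `θ_{a,b}`. -/
def thetaVertex (a b : ℕ) (i : Fin a) (j : ℕ) : Fin 2 ⊕ (Fin a × Fin (b - 1)) :=
  if _hj : j = 0 then Sum.inl 0
  else if hb : j < b then Sum.inr (i, ⟨j - 1, by omega⟩) else Sum.inl 1

/-- The theta graph `θ_{a,b}`: `a` internally disjoint paths of length `b`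
between two common endpoints. -/
def thetaGraph (a b : ℕ) : Finset (Finset (Fin 2 ⊕ (Fin a × Fin (b - 1)))) :=
  (Finset.univ ×ˢ Finset.range b).image fun p : Fin a × ℕ =>
    {thetaVertex a b p.1 p.2, thetaVertex a b p.1 (p.2 + 1)}

end Defs



namespace TT

variable {α : Type*} [DecidableEq α]

def supp (l : List (Finset α)) : Finset α := l.foldr (· ∪ ·) ∅

lemma mem_supp {x : α} {l : List (Finset α)} : x ∈ supp l ↔ ∃ e ∈ l, x ∈ e := by
  induction l with
  | nil => simp [supp]
  | cons a l ih => simp [supp] at ih ⊢; rw [ih]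

lemma supp_append (l₁ l₂ : List (Finset α)) : supp (l₁ ++ l₂) = supp l₁ ∪ supp l₂ := by
  ext x
  simp only [mem_union, mem_supp, List.mem_append]
  constructor
  · rintro ⟨e, he | he, hx⟩
    · exact Or.inl ⟨e, he, hx⟩
    · exact Or.inr ⟨e, he, hx⟩
  · rintro (⟨e, he, hx⟩ | ⟨e, he, hx⟩)
    · exact ⟨e, Or.inl he, hx⟩
    · exact ⟨e, Or.inr he, hx⟩

def Good (l : List (Finset α)) : Prop :=
  ∀ (i : ℕ) (hi : i < l.length), 1 ≤ i →
    ∃ v ∈ l.get ⟨i, hi⟩, v ∉ supp (l.take i) ∧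
      ∃ (s : ℕ) (hs : s < l.length), s < i ∧ (l.get ⟨i, hi⟩).erase v ⊆ l.get ⟨s, hs⟩

lemma good_singleton (e : Finset α) : Good [e] := by
  intro i hi h1; simp at hi; omega

lemma good_snoc {l : List (Finset α)} {e : Finset α} (hl : Good l)
    (h : ∃ v ∈ e, v ∉ supp l ∧ ∃ f ∈ l, e.erase v ⊆ f) : Good (l ++ [e]) := by
  intro i hi h1
  rcases lt_or_eq_of_le (Nat.lt_succ_iff.mp (by simpa using hi)) with hlt | heq
  · obtain ⟨v, hv, hv2, s, hs, hsi, hsub⟩ := hl i hlt h1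
    refine ⟨v, ?_, ?_, s, by simp; omega, hsi, ?_⟩
    · simp only [List.get_eq_getElem] at hv ⊢; rwa [List.getElem_append_left hlt]
    · rwa [List.take_append_of_le_length (by omega)]
    · simp only [List.get_eq_getElem] at hsub ⊢
      rw [List.getElem_append_left hlt, List.getElem_append_left hs]; exact hsub
  · obtain ⟨v, hv, hv2, f, hf, hsub⟩ := h
    obtain ⟨⟨s, hs⟩, rfl⟩ := List.get_of_mem hf
    subst heq
    refine ⟨v, ?_, ?_, s, by simp; omega, hs, ?_⟩
    · have : (l ++ [e]).get ⟨l.length, hi⟩ = e := by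
        simp
      rw [this]; exact hv
    · rwa [List.take_left]
    · have h1 : (l ++ [e]).get ⟨l.length, hi⟩ = e := by simp
      have h2 : (l ++ [e]).get ⟨s, by simp; omega⟩ = l.get ⟨s, hs⟩ := by
        simp only [List.get_eq_getElem]; rw [List.getElem_append_left hs]
      rw [h1, h2]; exact hsub

lemma good_nodup {l : List (Finset α)} (hl : Good l) : l.Nodup := by
  have key : ∀ (a b : ℕ) (ha : a < l.length) (hb : b < l.length), a < b →
      l.get ⟨a, ha⟩ = l.get ⟨b, hb⟩ → False := by
    intro a b ha hb hab heq
    obtain ⟨v, hv, hv2, _⟩ := hl b hb (by omega)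
    refine hv2 (mem_supp.mpr ⟨l.get ⟨a, ha⟩, ?_, heq ▸ hv⟩)
    rw [List.mem_take_iff_getElem]
    exact ⟨a, by omega, by simp⟩
  rw [List.nodup_iff_injective_get]
  intro ⟨a, ha⟩ ⟨b, hb⟩ hab
  rcases lt_trichotomy a b with h | h | h
  · exact absurd (key a b ha hb h hab) not_false
  · exact Fin.ext h
  · exact absurd (key b a hb ha h hab.symm) not_false


def pathFrom : Finset α → List α → List α → List (Finset α)
  | f, d :: ds, v :: vs => insert v (f.erase d) :: pathFrom (insert v (f.erase d)) ds vs
  | _, _, _ => []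

lemma extend_path (l : List (Finset α)) (f : Finset α) (drops adds : List α)
    (hl : Good l) (hf : f ∈ l)
    (hlen : drops.length = adds.length)
    (hdn : drops.Nodup) (hdf : ∀ d ∈ drops, d ∈ f)
    (han : adds.Nodup) (hfresh : ∀ v ∈ adds, v ∉ supp l) :
    Good (l ++ pathFrom f drops adds) ∧
    supp (l ++ pathFrom f drops adds) = supp l ∪ adds.toFinset ∧
    (∀ g ∈ pathFrom f drops adds, g.card = f.card) ∧
    (f \ drops.toFinset ∪ adds.toFinset) ∈ l ++ pathFrom f drops adds := by
  induction drops generalizing adds f l with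
  | nil =>
    have : adds = [] := List.eq_nil_of_length_eq_zero (by simpa using hlen.symm)
    subst this
    simpa [pathFrom] using ⟨hl, hf⟩
  | cons d ds ih =>
    match adds with
    | v :: vs =>
    have hfsub : f ⊆ supp l := fun x hx => mem_supp.mpr ⟨f, hf, hx⟩
    have hvf : v ∉ f := fun h => hfresh v (by simp) (hfsub h)
    have hdmem : d ∈ f := hdf d (by simp)
    set g : Finset α := insert v (f.erase d) with hg
    have hgood' : Good (l ++ [g]) := by
      refine good_snoc hl ⟨v, by simp [hg], hfresh v (by simp), f, hf, ?_⟩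
      rw [hg, Finset.erase_insert (fun h => hvf (Finset.mem_of_mem_erase h))]
      exact Finset.erase_subset _ _
    have hgmem : g ∈ l ++ [g] := by simp
    have hsuppl' : supp (l ++ [g]) = insert v (supp l) := by
      rw [supp_append]
      have : supp [g] = g := by simp [supp]
      rw [this, hg]
      ext x
      simp only [Finset.mem_union, Finset.mem_insert, Finset.mem_erase]
      constructor
      · rintro (h | rfl | ⟨-, h⟩)
        exacts [Or.inr h, Or.inl rfl, Or.inr (hfsub h)]
      · rintro (rfl | h)
        exacts [Or.inr (Or.inl rfl), Or.inl h]
    have hdsf : ∀ d' ∈ ds, d' ∈ g := by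
      intro d' hd'
      have : d' ≠ d := fun h => (List.nodup_cons.mp hdn).1 (h ▸ hd')
      exact Finset.mem_insert_of_mem (Finset.mem_erase.mpr ⟨this, hdf d' (by simp [hd'])⟩)
    have hvsfresh : ∀ w ∈ vs, w ∉ supp (l ++ [g]) := by
      intro w hw
      rw [hsuppl']
      simp only [Finset.mem_insert]
      rintro (rfl | h)
      · exact (List.nodup_cons.mp han).1 hw
      · exact hfresh w (by simp [hw]) h
    obtain ⟨G1, G2, G3, G4⟩ := ih (l ++ [g]) g vs hgood' hgmem (by simpa using hlen)
      (List.nodup_cons.mp hdn).2 hdsf (List.nodup_cons.mp han).2 hvsfresh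
    have hpeq : pathFrom f (d :: ds) (v :: vs) = g :: pathFrom g ds vs := rfl
    have hassoc : l ++ pathFrom f (d :: ds) (v :: vs) = (l ++ [g]) ++ pathFrom g ds vs := by
      rw [hpeq]; simp
    have hgcard : g.card = f.card := by
      rw [hg, Finset.card_insert_of_notMem (fun h => hvf (Finset.mem_of_mem_erase h)),
        Finset.card_erase_of_mem hdmem]
      have : 1 ≤ f.card := Finset.card_pos.mpr ⟨d, hdmem⟩
      omega
    refine ⟨hassoc ▸ G1, ?_, ?_, ?_⟩
    · rw [hassoc, G2, hsuppl']
      ext x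
      simp only [Finset.mem_union, Finset.mem_insert, List.toFinset_cons, List.mem_toFinset]
      tauto
    · intro e he
      rw [hpeq] at he
      rcases List.mem_cons.mp he with rfl | he
      · exact hgcard
      · rw [← hgcard]; exact G3 e he
    · rw [hassoc]
      have hvds : v ∉ ds := fun h => hfresh v (by simp) (hfsub (hdf v (by simp [h])))
      have heq : f \ (d :: ds).toFinset ∪ (v :: vs).toFinset
          = g \ ds.toFinset ∪ vs.toFinset := by
        ext x
        simp only [Finset.mem_union, Finset.mem_sdiff, List.toFinset_cons,
          Finset.mem_insert, List.mem_toFinset, hg, Finset.mem_erase]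
        constructor
        · rintro (⟨hxf, hx⟩ | rfl | hx)
          · push_neg at hx
            exact Or.inl ⟨Or.inr ⟨hx.1, hxf⟩, hx.2⟩
          · exact Or.inl ⟨Or.inl rfl, hvds⟩
          · exact Or.inr hx
        · rintro (⟨rfl | ⟨hxd, hxf⟩, hxds⟩ | hx)
          · exact Or.inr (Or.inl rfl)
          · refine Or.inl ⟨hxf, ?_⟩
            push_neg
            exact ⟨hxd, hxds⟩
          · exact Or.inr (Or.inr hx)
      rw [heq]
      exact G4


end TT

namespace ST
open TT


variable {s t : ℕ}

abbrev V (s t : ℕ) := (Fin s ⊕ Fin t) ⊕ (Finset (Fin s ⊕ Fin t) × ℕ)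

def A (i : Fin s) : V s t := Sum.inl (Sum.inl i)
def B (j : Fin t) : V s t := Sum.inl (Sum.inr j)
def C (i : Fin s) (j : Fin t) (k : ℕ) : V s t := Sum.inr ({Sum.inl i, Sum.inr j}, k)

def Cs (r : ℕ) (i : Fin s) (j : Fin t) : Finset (V s t) := (range (r-2)).image (C i j)
def Ee (r : ℕ) (i : Fin s) (j : Fin t) : Finset (V s t) := {A i, B j} ∪ Cs r i j
def Fil (s t r : ℕ) (hs : 0 < s) (ht : 0 < t) : Finset (V s t) :=
  (range (r - s - 1)).image (C ⟨0, hs⟩ ⟨0, ht⟩)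
def Hub (s t r : ℕ) (hs : 0 < s) (ht : 0 < t) (j : Fin t) : Finset (V s t) :=
  Finset.univ.image A ∪ {B j} ∪ Fil s t r hs ht

lemma key_inj {i i' : Fin s} {j j' : Fin t}
    (h : ({Sum.inl i, Sum.inr j} : Finset (Fin s ⊕ Fin t)) = {Sum.inl i', Sum.inr j'}) :
    i = i' ∧ j = j' := by
  have h1 : (Sum.inl i : Fin s ⊕ Fin t) ∈ ({Sum.inl i', Sum.inr j'} : Finset _) := by
    rw [← h]; simp
  have h2 : (Sum.inr j : Fin s ⊕ Fin t) ∈ ({Sum.inl i', Sum.inr j'} : Finset _) := by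
    rw [← h]; simp
  simp at h1 h2
  exact ⟨h1, h2⟩

@[simp] lemma C_inj {i i' : Fin s} {j j' : Fin t} {k k' : ℕ} :
    (C i j k : V s t) = C i' j' k' ↔ i = i' ∧ j = j' ∧ k = k' := by
  constructor
  · intro h
    simp only [C, Sum.inr.injEq, Prod.mk.injEq] at h
    obtain ⟨h1, h2⟩ := h
    obtain ⟨hi, hj⟩ := key_inj h1
    exact ⟨hi, hj, h2⟩
  · rintro ⟨rfl, rfl, rfl⟩; rfl

@[simp] lemma A_ne_B {i : Fin s} {j : Fin t} : (A i : V s t) ≠ B j := by simp [A, B]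
@[simp] lemma A_ne_C {i i' : Fin s} {j : Fin t} {k : ℕ} : (A i : V s t) ≠ C i' j k := by
  simp [A, C]
@[simp] lemma B_ne_C {i : Fin s} {j j' : Fin t} {k : ℕ} : (B j : V s t) ≠ C i j' k := by
  simp [B, C]
@[simp] lemma A_inj {i i' : Fin s} : (A i : V s t) = A i' ↔ i = i' := by simp [A]
@[simp] lemma B_inj {j j' : Fin t} : (B j : V s t) = B j' ↔ j = j' := by simp [B]

lemma mem_Cs {r : ℕ} {i : Fin s} {j : Fin t} {x : V s t} :
    x ∈ Cs r i j ↔ ∃ k < r - 2, x = C i j k := by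
  simp [Cs, eq_comm]

lemma mem_Ee {r : ℕ} {i : Fin s} {j : Fin t} {x : V s t} :
    x ∈ Ee r i j ↔ x = A i ∨ x = B j ∨ ∃ k < r - 2, x = C i j k := by
  simp [Ee, mem_Cs]

lemma mem_Fil {s t r : ℕ} {hs : 0 < s} {ht : 0 < t} {x : V s t} :
    x ∈ Fil s t r hs ht ↔ ∃ k < r - s - 1, x = C ⟨0, hs⟩ ⟨0, ht⟩ k := by
  simp [Fil, eq_comm]

lemma mem_Hub {s t r : ℕ} {hs : 0 < s} {ht : 0 < t} {j : Fin t} {x : V s t} :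
    x ∈ Hub s t r hs ht j ↔ (∃ i, x = A i) ∨ x = B j ∨ ∃ k < r - s - 1, x = C ⟨0, hs⟩ ⟨0, ht⟩ k := by
  simp [Hub, mem_Fil, eq_comm (a := x)]
  exact or_left_comm

lemma card_Cs {r : ℕ} (i : Fin s) (j : Fin t) : (Cs r i j : Finset (V s t)).card = r - 2 := by
  rw [Cs, Finset.card_image_of_injective _ (fun a b h => by simpa using h), card_range]

lemma card_Ee {r : ℕ} (hr : 2 ≤ r) (i : Fin s) (j : Fin t) :
    (Ee r i j : Finset (V s t)).card = r := by
  rw [Ee, Finset.card_union_of_disjoint, card_Cs]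
  · have : ({A i, B j} : Finset (V s t)).card = 2 := by
      rw [card_insert_of_notMem (by simp), card_singleton]
    omega
  · simp only [Finset.disjoint_left, Finset.mem_insert, Finset.mem_singleton]
    rintro x (rfl | rfl) hx <;> rw [mem_Cs] at hx <;> obtain ⟨k, _, hk⟩ := hx
    · exact A_ne_C hk
    · exact B_ne_C hk

lemma card_Hub {s t r : ℕ} (hs : 0 < s) (ht : 0 < t) (hr : s + 1 ≤ r) (j : Fin t) :
    (Hub s t r hs ht j).card = r := by
  have hA : (Finset.univ.image (A (s := s) (t := t))).card = s := by
    rw [Finset.card_image_of_injective _ (fun a b h => by simpa using h), card_univ,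
      Fintype.card_fin]
  have hF : (Fil s t r hs ht).card = r - s - 1 := by
    rw [Fil, Finset.card_image_of_injective _ (fun a b h => by simpa using h), card_range]
  rw [Hub, Finset.card_union_of_disjoint, Finset.card_union_of_disjoint, hA, hF,
    card_singleton]
  · omega
  · simp only [Finset.disjoint_left, Finset.mem_image, Finset.mem_singleton]
    rintro x ⟨i, -, rfl⟩ h
    exact A_ne_B h
  · simp only [Finset.disjoint_left, Finset.mem_union, Finset.mem_image, Finset.mem_singleton]
    rintro x hx hxF
    rw [mem_Fil] at hxF
    obtain ⟨k, -, rfl⟩ := hxF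
    rcases hx with ⟨i, -, h⟩ | h
    · exact A_ne_C h
    · exact B_ne_C h.symm


/-- drops for a generic branch -/
def gdrops (s t r : ℕ) (hs : 0 < s) (ht : 0 < t) (i : Fin s) : List (V s t) :=
  ((List.finRange s).erase i).map A ++ (List.range (r - s - 1)).map (C ⟨0, hs⟩ ⟨0, ht⟩)

/-- adds for a generic branch -/
def gadds (r : ℕ) (i : Fin s) (j : Fin t) : List (V s t) := (List.range (r - 2)).map (C i j)

/-- drops for the special (0,0) branch -/
def sdrops (s t : ℕ) (hs : 0 < s) : List (V s t) := ((List.finRange s).erase ⟨0, hs⟩).map A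

/-- adds for the special (0,0) branch -/
def sadds (s t r : ℕ) (hs : 0 < s) (ht : 0 < t) : List (V s t) :=
  (List.range (s - 1)).map fun k => C ⟨0, hs⟩ ⟨0, ht⟩ (r - s - 1 + k)

lemma toFinset_map' {α β : Type*} [DecidableEq α] [DecidableEq β] (f : α → β) (l : List α) :
    (l.map f).toFinset = l.toFinset.image f := by ext x; simp

lemma toFinset_range' (n : ℕ) : (List.range n).toFinset = Finset.range n := by ext x; simp

lemma mem_erase_finRange {n : ℕ} {i a : Fin n} :
    a ∈ (List.finRange n).erase i ↔ a ≠ i := by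
  rw [List.Nodup.mem_erase_iff (List.nodup_finRange n)]
  simp [List.mem_finRange]

lemma length_erase_finRange {n : ℕ} (i : Fin n) :
    ((List.finRange n).erase i).length = n - 1 := by
  rw [List.length_erase_of_mem (List.mem_finRange i), List.length_finRange]

lemma gdrops_length (hs : 0 < s) (ht : 0 < t) (r : ℕ) (i : Fin s) :
    (gdrops s t r hs ht i).length = s - 1 + (r - s - 1) := by
  simp [gdrops, length_erase_finRange]

lemma gadds_length (r : ℕ) (i : Fin s) (j : Fin t) :
    (gadds r i j : List (V s t)).length = r - 2 := by simp [gadds]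

lemma gdrops_nodup (hs : 0 < s) (ht : 0 < t) (r : ℕ) (i : Fin s) :
    (gdrops s t r hs ht i).Nodup := by
  rw [gdrops, List.nodup_append]
  refine ⟨List.Nodup.map (fun a b h => A_inj.mp h) ((List.nodup_finRange s).erase i),
    List.Nodup.map (fun a b h => (C_inj.mp h).2.2) List.nodup_range, ?_⟩
  intro x hx y hy h
  obtain ⟨a, -, rfl⟩ := List.mem_map.mp hx
  obtain ⟨k, -, rfl⟩ := List.mem_map.mp hy
  exact A_ne_C h

lemma gadds_nodup (r : ℕ) (i : Fin s) (j : Fin t) : (gadds r i j : List (V s t)).Nodup :=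
  List.Nodup.map (fun a b h => (C_inj.mp h).2.2) List.nodup_range

lemma sdrops_nodup (hs : 0 < s) : (sdrops s t hs).Nodup :=
  List.Nodup.map (fun a b h => A_inj.mp h) ((List.nodup_finRange s).erase _)

lemma sadds_nodup (hs : 0 < s) (ht : 0 < t) (r : ℕ) : (sadds s t r hs ht).Nodup :=
  List.Nodup.map (fun a b h => by
    have := (C_inj.mp h).2.2; omega) List.nodup_range

lemma gdrops_subset (hs : 0 < s) (ht : 0 < t) (r : ℕ) (i : Fin s) (j : Fin t) :
    ∀ d ∈ gdrops s t r hs ht i, d ∈ Hub s t r hs ht j := by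
  intro d hd
  rw [gdrops, List.mem_append] at hd
  rw [mem_Hub]
  rcases hd with hd | hd
  · obtain ⟨a, -, rfl⟩ := List.mem_map.mp hd
    exact Or.inl ⟨a, rfl⟩
  · obtain ⟨k, hk, rfl⟩ := List.mem_map.mp hd
    exact Or.inr (Or.inr ⟨k, by simpa using hk, rfl⟩)

lemma sdrops_subset (hs : 0 < s) (ht : 0 < t) (r : ℕ) (j : Fin t) :
    ∀ d ∈ sdrops s t hs, d ∈ Hub s t r hs ht j := by
  intro d hd
  obtain ⟨a, -, rfl⟩ := List.mem_map.mp hd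
  rw [mem_Hub]
  exact Or.inl ⟨a, rfl⟩

lemma gadds_toFinset (r : ℕ) (i : Fin s) (j : Fin t) :
    (gadds r i j : List (V s t)).toFinset = Cs r i j := by
  rw [gadds, toFinset_map', toFinset_range']; rfl

/-- generic branch result -/
lemma hub_sdiff (hs : 0 < s) (ht : 0 < t) {r : ℕ} (hr : s + 1 ≤ r) (i : Fin s) (j : Fin t) :
    Hub s t r hs ht j \ (gdrops s t r hs ht i).toFinset ∪ (gadds r i j).toFinset
      = Ee r i j := by
  ext x
  rw [Finset.mem_union, Finset.mem_sdiff, mem_Hub, mem_Ee, gadds_toFinset, mem_Cs]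
  simp only [gdrops, List.toFinset_append, Finset.mem_union, List.mem_toFinset,
    List.mem_map, mem_erase_finRange, List.mem_range, not_or, not_exists, not_and]
  constructor
  · rintro (⟨(⟨i', rfl⟩ | rfl | ⟨k, hk, rfl⟩), hnd⟩ | ⟨k, hk, rfl⟩)
    · by_cases h : i' = i
      · exact Or.inl (by rw [h])
      · exact absurd rfl (hnd.1 i' h)
    · exact Or.inr (Or.inl rfl)
    · exact absurd rfl (hnd.2 k hk)
    · exact Or.inr (Or.inr ⟨k, hk, rfl⟩)
  · rintro (rfl | rfl | ⟨k, hk, rfl⟩)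
    · refine Or.inl ⟨Or.inl ⟨i, rfl⟩, ⟨fun i' hi' h => hi' (A_inj.mp h), fun k _ h => A_ne_C h.symm⟩⟩
    · exact Or.inl ⟨Or.inr (Or.inl rfl), ⟨fun i' _ h => A_ne_B h, fun k _ h => B_ne_C h.symm⟩⟩
    · exact Or.inr ⟨k, hk, rfl⟩

/-- special (0,0) branch result -/
lemma hub_sdiff0 (hs : 0 < s) (ht : 0 < t) {r : ℕ} (hr : s + 1 ≤ r) :
    Hub s t r hs ht ⟨0, ht⟩ \ (sdrops s t hs).toFinset ∪ (sadds s t r hs ht).toFinset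
      = Ee r ⟨0, hs⟩ ⟨0, ht⟩ := by
  ext x
  rw [Finset.mem_union, Finset.mem_sdiff, mem_Hub, mem_Ee]
  simp only [sdrops, sadds, toFinset_map', toFinset_range',
    Finset.mem_image, Finset.mem_range, List.mem_toFinset, mem_erase_finRange,
    not_exists, not_and]
  constructor
  · rintro (⟨(⟨i', rfl⟩ | rfl | ⟨k, hk, rfl⟩), hnd⟩ | ⟨k, hk, rfl⟩)
    · by_cases h : i' = (⟨0, hs⟩ : Fin s)
      · exact Or.inl (by rw [h])
      · exact absurd rfl (hnd i' h)
    · exact Or.inr (Or.inl rfl)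
    · exact Or.inr (Or.inr ⟨k, by omega, rfl⟩)
    · exact Or.inr (Or.inr ⟨r - s - 1 + k, by omega, rfl⟩)
  · rintro (rfl | rfl | ⟨k, hk, rfl⟩)
    · exact Or.inl ⟨Or.inl ⟨_, rfl⟩, fun i' hi' h => hi' (A_inj.mp h)⟩
    · exact Or.inl ⟨Or.inr (Or.inl rfl), fun i' _ h => A_ne_B h⟩
    · by_cases h : k < r - s - 1
      · exact Or.inl ⟨Or.inr (Or.inr ⟨k, h, rfl⟩), fun i' _ h => A_ne_C h⟩
      · exact Or.inr ⟨k - (r - s - 1), by omega, by rw [show r - s - 1 + (k - (r - s - 1)) = k by omega]⟩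

/-- hub step result -/
lemma hub_step (hs : 0 < s) (ht : 0 < t) {r : ℕ} (j j' : Fin t) (hne : j ≠ j') :
    Hub s t r hs ht j \ ([B j] : List (V s t)).toFinset ∪ ([B j'] : List (V s t)).toFinset
      = Hub s t r hs ht j' := by
  have h1 : ∀ (y : V s t), ([y] : List (V s t)).toFinset = ({y} : Finset (V s t)) := by
    intro y; ext z; rw [List.mem_toFinset, Finset.mem_singleton]; exact List.mem_singleton
  ext x
  rw [Finset.mem_union, Finset.mem_sdiff, mem_Hub, mem_Hub, h1, h1, Finset.mem_singleton,
    Finset.mem_singleton]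
  constructor
  · rintro (⟨(⟨i', rfl⟩ | rfl | ⟨k, hk, rfl⟩), hnd⟩ | rfl)
    · exact Or.inl ⟨i', rfl⟩
    · exact absurd rfl hnd
    · exact Or.inr (Or.inr ⟨k, hk, rfl⟩)
    · exact Or.inr (Or.inl rfl)
  · rintro (⟨i', rfl⟩ | rfl | ⟨k, hk, rfl⟩)
    · exact Or.inl ⟨Or.inl ⟨i', rfl⟩, A_ne_B⟩
    · exact Or.inr rfl
    · exact Or.inl ⟨Or.inr (Or.inr ⟨k, hk, rfl⟩), fun h => B_ne_C h.symm⟩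


-- appended to all.lean within ST namespace for testing
section Branches
open TT
variable {s t : ℕ}

lemma branches (s t r : ℕ) (hs : 0 < s) (ht : 0 < t) (hr : s + 1 ≤ r)
    (j : Fin t) (m0 : ℕ) (l : List (Finset (V s t)))
    (hG : Good l) (hhub : Hub s t r hs ht j ∈ l) (hc : ∀ g ∈ l, g.card = r)
    (hfresh : ∀ (i : Fin s) (k : ℕ), m0 ≤ (i : ℕ) → k < r - 2 → C i j k ∉ supp l) :
    ∃ rest, Good (l ++ rest) ∧ (∀ g ∈ l ++ rest, g.card = r) ∧
      supp (l ++ rest) = supp l ∪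
        (Finset.univ.filter fun i : Fin s => m0 ≤ (i : ℕ)).biUnion (fun i => Cs r i j) ∧
      (∀ i : Fin s, m0 ≤ (i : ℕ) → Ee r i j ∈ l ++ rest) := by
  suffices h : ∀ m : ℕ, m0 ≤ m → m ≤ s → ∃ rest, Good (l ++ rest) ∧
      (∀ g ∈ l ++ rest, g.card = r) ∧
      supp (l ++ rest) = supp l ∪
        (Finset.univ.filter fun i : Fin s => m0 ≤ (i : ℕ) ∧ (i : ℕ) < m).biUnion
          (fun i => Cs r i j) ∧
      (∀ i : Fin s, m0 ≤ (i : ℕ) → (i : ℕ) < m → Ee r i j ∈ l ++ rest) by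
    by_cases hm0 : m0 ≤ s
    · obtain ⟨rest, h1, h2, h3, h4⟩ := h s hm0 le_rfl
      refine ⟨rest, h1, h2, ?_, fun i hi => h4 i hi i.isLt⟩
      rw [h3]
      congr 1
      apply Finset.biUnion_congr _ (fun _ _ => rfl)
      apply Finset.filter_congr
      intro i _
      simp [i.isLt]
    · refine ⟨[], by simpa using hG, by simpa using hc, ?_, fun i hi => absurd (lt_of_le_of_lt hi i.isLt) (by omega)⟩
      have : (Finset.univ.filter fun i : Fin s => m0 ≤ (i : ℕ)) = ∅ := by
        apply Finset.filter_false_of_mem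
        intro i _
        have := i.isLt
        omega
      simp [this]
  intro m hm0 hms
  induction m, hm0 using Nat.le_induction with
  | base =>
    refine ⟨[], by simpa using hG, by simpa using hc, ?_, fun i h1 h2 => absurd h2 (by omega)⟩
    have : (Finset.univ.filter fun i : Fin s => m0 ≤ (i : ℕ) ∧ (i : ℕ) < m0) = ∅ :=
      Finset.filter_false_of_mem (fun i _ => by omega)
    simp [this]
  | succ m hm ih =>
    obtain ⟨rest, h1, h2, h3, h4⟩ := ih (by omega)
    set i : Fin s := ⟨m, by omega⟩ with hidef
    have hhub' : Hub s t r hs ht j ∈ l ++ rest := List.mem_append_left _ hhub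
    have hfresh' : ∀ v ∈ gadds r i j, v ∉ supp (l ++ rest) := by
      intro v hv
      obtain ⟨k, hk, rfl⟩ := List.mem_map.mp hv
      rw [h3]
      intro hx
      rcases Finset.mem_union.mp hx with hx | hx
      · exact hfresh i k (by simp [hidef] <;> omega) (by simpa using hk) hx
      · obtain ⟨i', hi', hmem⟩ := Finset.mem_biUnion.mp hx
        obtain ⟨-, hi1, hi2⟩ := Finset.mem_filter.mp hi'
        rw [mem_Cs] at hmem
        obtain ⟨k', -, hk'⟩ := hmem
        obtain ⟨hii, -, -⟩ := C_inj.mp hk'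
        have : (i' : ℕ) = m := by rw [← hii]; try simp [hidef]
        omega
    obtain ⟨G1, G2, G3, G4⟩ := extend_path (l ++ rest) (Hub s t r hs ht j)
      (gdrops s t r hs ht i) (gadds r i j) h1 hhub'
      (by rw [gdrops_length hs ht, gadds_length]; omega)
      (gdrops_nodup hs ht r i) (gdrops_subset hs ht r i j)
      (gadds_nodup r i j) hfresh'
    rw [hub_sdiff hs ht hr i j] at G4
    refine ⟨rest ++ pathFrom (Hub s t r hs ht j) (gdrops s t r hs ht i) (gadds r i j),
      ?_, ?_, ?_, ?_⟩
    · rwa [← List.append_assoc]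
    · rw [← List.append_assoc]
      intro g hg
      rcases List.mem_append.mp hg with hg | hg
      · exact h2 g hg
      · rw [G3 g hg]
        exact hc _ hhub
    · rw [← List.append_assoc, G2, h3, gadds_toFinset]
      ext x
      simp only [Finset.mem_union, Finset.mem_biUnion, Finset.mem_filter, Finset.mem_univ,
        true_and]
      constructor
      · rintro ((hx | ⟨i', ⟨ha, hb⟩, hx⟩) | hx)
        · exact Or.inl hx
        · exact Or.inr ⟨i', ⟨ha, by omega⟩, hx⟩
        · exact Or.inr ⟨i, ⟨by simp [hidef] <;> omega, by simp [hidef] <;> omega⟩, hx⟩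
      · rintro (hx | ⟨i', ⟨ha, hb⟩, hx⟩)
        · exact Or.inl (Or.inl hx)
        · by_cases hii : (i' : ℕ) < m
          · exact Or.inl (Or.inr ⟨i', ⟨ha, hii⟩, hx⟩)
          · have : i' = i := Fin.ext (by simp [hidef] <;> omega)
            exact Or.inr (this ▸ hx)
    · intro i' hi1 hi2
      rw [← List.append_assoc]
      by_cases hii : (i' : ℕ) < m
      · exact List.mem_append_left _ (h4 i' hi1 hii)
      · have : i' = i := Fin.ext (by simp [hidef] <;> omega)
        rw [this]
        exact G4

end Branches

section Outer
open TT

lemma supp_singleton {α : Type*} [DecidableEq α] (e : Finset α) : supp [e] = e := by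
  simp [supp]

variable {s t : ℕ}

def SuppUpto (s t r n : ℕ) : Finset (V s t) :=
  Finset.univ.image A ∪ (Finset.univ.filter fun j : Fin t => (j : ℕ) < n).image B ∪
    ((Finset.univ : Finset (Fin s)) ×ˢ (Finset.univ.filter fun j : Fin t => (j : ℕ) < n)).biUnion
      fun p => Cs r p.1 p.2

lemma mem_SuppUpto {r n : ℕ} {x : V s t} :
    x ∈ SuppUpto s t r n ↔ (∃ i, x = A i) ∨ (∃ j : Fin t, (j : ℕ) < n ∧ x = B j) ∨
      ∃ (i : Fin s) (j : Fin t), (j : ℕ) < n ∧ ∃ k < r - 2, x = C i j k := by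
  simp only [SuppUpto, Finset.mem_union, Finset.mem_image, Finset.mem_biUnion,
    Finset.mem_filter, Finset.mem_univ, true_and, Finset.mem_product, mem_Cs]
  constructor
  · rintro ((⟨i, rfl⟩ | ⟨j, hj, rfl⟩) | ⟨⟨i, j⟩, hj, k, hk, rfl⟩)
    · exact Or.inl ⟨i, rfl⟩
    · exact Or.inr (Or.inl ⟨j, hj, rfl⟩)
    · exact Or.inr (Or.inr ⟨i, j, hj, k, hk, rfl⟩)
  · rintro (⟨i, rfl⟩ | ⟨j, hj, rfl⟩ | ⟨i, j, hj, k, hk, rfl⟩)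
    · exact Or.inl (Or.inl ⟨i, rfl⟩)
    · exact Or.inl (Or.inr ⟨j, hj, rfl⟩)
    · exact Or.inr ⟨⟨i, j⟩, hj, k, hk, rfl⟩

lemma sadds_toFinset (hs : 0 < s) (ht : 0 < t) (r : ℕ) :
    (sadds s t r hs ht).toFinset
      = (Finset.range (s - 1)).image fun k => (C ⟨0, hs⟩ ⟨0, ht⟩ (r - s - 1 + k) : V s t) := by
  rw [sadds, toFinset_map', toFinset_range']

lemma outer (s t r : ℕ) (hs0 : 0 < s) (hs : 2 ≤ s) (ht : 0 < t) (hr : s + 1 ≤ r) :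
    ∀ n : ℕ, 1 ≤ n → n ≤ t → ∃ l : List (Finset (V s t)), Good l ∧ (∀ g ∈ l, g.card = r) ∧
      supp l = SuppUpto s t r n ∧
      (∀ (i : Fin s) (j : Fin t), (j : ℕ) < n → Ee r i j ∈ l) ∧
      (∀ j : Fin t, (j : ℕ) + 1 = n → Hub s t r hs0 ht j ∈ l) := by
  intro n hn1
  induction n, hn1 using Nat.le_induction with
  | base =>
    intro hnt
    set j0 : Fin t := ⟨0, ht⟩ with hj0
    set i0 : Fin s := ⟨0, hs0⟩ with hi0
    set l0 : List (Finset (V s t)) := [Hub s t r hs0 ht j0] with hl0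
    have hG0 : Good l0 := good_singleton _
    have hhub0 : Hub s t r hs0 ht j0 ∈ l0 := by simp [hl0]
    have hsupp0 : supp l0 = Hub s t r hs0 ht j0 := supp_singleton _
    have hc0 : ∀ g ∈ l0, g.card = r := by
      intro g hg
      rw [hl0, List.mem_singleton] at hg
      rw [hg]
      exact card_Hub hs0 ht hr j0
    -- special (0,0) branch
    have hfresh0 : ∀ v ∈ sadds s t r hs0 ht, v ∉ supp l0 := by
      intro v hv
      obtain ⟨k, hk, rfl⟩ := List.mem_map.mp hv
      rw [hsupp0, mem_Hub]
      rintro (⟨i, hi⟩ | hb | ⟨k', hk', hc⟩)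
      · exact A_ne_C hi.symm
      · exact B_ne_C hb.symm
      · obtain ⟨-, -, h⟩ := C_inj.mp hc.symm
        rw [List.mem_range] at hk
        omega
    obtain ⟨G1, G2, G3, G4⟩ := extend_path l0 (Hub s t r hs0 ht j0)
      (sdrops s t hs0) (sadds s t r hs0 ht) hG0 hhub0
      (by simp [sdrops, sadds, length_erase_finRange])
      (sdrops_nodup hs0) (sdrops_subset hs0 ht r j0)
      (sadds_nodup hs0 ht r) hfresh0
    rw [hub_sdiff0 hs0 ht hr] at G4
    set l1 := l0 ++ pathFrom (Hub s t r hs0 ht j0) (sdrops s t hs0) (sadds s t r hs0 ht)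
      with hl1
    have hc1 : ∀ g ∈ l1, g.card = r := by
      intro g hg
      rcases List.mem_append.mp hg with hg | hg
      · exact hc0 g hg
      · rw [G3 g hg]; exact card_Hub hs0 ht hr j0
    have hsupp1 : supp l1 = Hub s t r hs0 ht j0 ∪ (sadds s t r hs0 ht).toFinset := by
      rw [G2, hsupp0]
    have hfresh1 : ∀ (i : Fin s) (k : ℕ), 1 ≤ (i : ℕ) → k < r - 2 →
        C i j0 k ∉ supp l1 := by
      intro i k hi hk hmem
      rw [hsupp1, Finset.mem_union, mem_Hub, sadds_toFinset, Finset.mem_image] at hmem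
      rcases hmem with (⟨i', hi'⟩ | hb | ⟨k', hk', hc⟩) | ⟨k', -, hc⟩
      · exact A_ne_C hi'.symm
      · exact B_ne_C hb.symm
      · obtain ⟨h1, -, -⟩ := C_inj.mp hc
        have : (i : ℕ) = 0 := by rw [h1]
        omega
      · obtain ⟨h1, -, -⟩ := C_inj.mp hc.symm
        have : (i : ℕ) = 0 := by rw [h1]
        omega
    obtain ⟨rest, B1, B2, B3, B4⟩ := branches s t r hs0 ht hr j0 1 l1 G1
      (List.mem_append_left _ hhub0) hc1 hfresh1
    refine ⟨l1 ++ rest, B1, B2, ?_, ?_, ?_⟩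
    · rw [B3, hsupp1, sadds_toFinset]
      ext x
      simp only [Finset.mem_union, mem_Hub, Finset.mem_image, Finset.mem_range,
        Finset.mem_biUnion, Finset.mem_filter, Finset.mem_univ, true_and, mem_Cs,
        mem_SuppUpto]
      constructor
      · rintro (((⟨i, rfl⟩ | rfl | ⟨k, hk, rfl⟩) | ⟨k, hk, rfl⟩) | ⟨i, hi, k, hk, rfl⟩)
        · exact Or.inl ⟨i, rfl⟩
        · exact Or.inr (Or.inl ⟨j0, by simp [hj0], rfl⟩)
        · exact Or.inr (Or.inr ⟨i0, j0, by simp [hj0], k, by omega, rfl⟩)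
        · exact Or.inr (Or.inr ⟨i0, j0, by simp [hj0], r - s - 1 + k, by omega, rfl⟩)
        · exact Or.inr (Or.inr ⟨i, j0, by simp [hj0], k, hk, rfl⟩)
      · rintro (⟨i, rfl⟩ | ⟨j, hj, rfl⟩ | ⟨i, j, hj, k, hk, rfl⟩)
        · exact Or.inl (Or.inl (Or.inl ⟨i, rfl⟩))
        · have : j = j0 := Fin.ext (by simp [hj0] <;> omega)
          rw [this]
          exact Or.inl (Or.inl (Or.inr (Or.inl rfl)))
        · have hjj : j = j0 := Fin.ext (by simp [hj0] <;> omega)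
          subst hjj
          by_cases hi1 : 1 ≤ (i : ℕ)
          · exact Or.inr ⟨i, hi1, k, hk, rfl⟩
          · have hii : i = i0 := Fin.ext (by simp [hi0] <;> omega)
            subst hii
            by_cases hklow : k < r - s - 1
            · exact Or.inl (Or.inl (Or.inr (Or.inr ⟨k, hklow, rfl⟩)))
            · refine Or.inl (Or.inr ⟨k - (r - s - 1), by omega, ?_⟩)
              rw [show r - s - 1 + (k - (r - s - 1)) = k by omega]
    · intro i j hj
      have hjj : j = j0 := Fin.ext (by simp [hj0] <;> omega)
      subst hjj
      by_cases hi1 : 1 ≤ (i : ℕ)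
      · exact B4 i hi1
      · have hii : i = i0 := Fin.ext (by simp [hi0] <;> omega)
        subst hii
        exact List.mem_append_left _ G4
    · intro j hj
      have hjj : j = j0 := Fin.ext (by simp [hj0] <;> omega)
      subst hjj
      exact List.mem_append_left _ (List.mem_append_left _ hhub0)
  | succ n hn ih =>
    intro hnt
    obtain ⟨l, hG, hc, hsupp, hEe, hHub⟩ := ih (by omega)
    set jold : Fin t := ⟨n - 1, by omega⟩ with hjold
    set jnew : Fin t := ⟨n, by omega⟩ with hjnew
    have hhubmem : Hub s t r hs0 ht jold ∈ l := hHub jold (by simp [hjold] <;> omega)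
    have hfreshB : ∀ v ∈ [(B jnew : V s t)], v ∉ supp l := by
      intro v hv
      rw [List.mem_singleton] at hv
      subst hv
      rw [hsupp, mem_SuppUpto]
      rintro (⟨i, hi⟩ | ⟨j, hj, hb⟩ | ⟨i, j, hj, k, hk, hc⟩)
      · exact A_ne_B hi.symm
      · rw [B_inj] at hb
        subst hb
        simp [hjnew] at hj
      · exact B_ne_C hc
    obtain ⟨G1, G2, G3, G4⟩ := extend_path l (Hub s t r hs0 ht jold)
      ([B jold]) ([B jnew]) hG hhubmem rfl (List.nodup_singleton _)
      (by
        intro d hd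
        rw [List.mem_singleton] at hd
        subst hd
        rw [mem_Hub]
        exact Or.inr (Or.inl rfl))
      (List.nodup_singleton _) hfreshB
    rw [hub_step hs0 ht jold jnew (by
      intro h
      have := congrArg Fin.val h
      simp [hjold, hjnew] at this
      omega)] at G4
    set l' := l ++ pathFrom (Hub s t r hs0 ht jold) [B jold] [B jnew] with hl'
    have hsingB : ([(B jnew : V s t)] : List (V s t)).toFinset = {(B jnew : V s t)} := by
      ext z; rw [List.mem_toFinset, Finset.mem_singleton]; exact List.mem_singleton
    have hsupp' : supp l' = SuppUpto s t r n ∪ {(B jnew : V s t)} := by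
      rw [G2, hsupp, hsingB]
    have hc' : ∀ g ∈ l', g.card = r := by
      intro g hg
      rcases List.mem_append.mp hg with hg | hg
      · exact hc g hg
      · rw [G3 g hg]; exact card_Hub hs0 ht hr jold
    have hfresh' : ∀ (i : Fin s) (k : ℕ), 0 ≤ (i : ℕ) → k < r - 2 →
        C i jnew k ∉ supp l' := by
      intro i k _ hk hmem
      rw [hsupp', Finset.mem_union, mem_SuppUpto, Finset.mem_singleton] at hmem
      rcases hmem with (⟨i', hi'⟩ | ⟨j', hj', hb⟩ | ⟨i', j', hj', k', hk', hc2⟩) | hb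
      · exact A_ne_C hi'.symm
      · exact B_ne_C hb.symm
      · obtain ⟨-, h2, -⟩ := C_inj.mp hc2
        have : (j' : ℕ) = n := by rw [← h2]
        omega
      · exact B_ne_C hb.symm
    obtain ⟨rest, B1, B2, B3, B4⟩ := branches s t r hs0 ht hr jnew 0 l' G1 G4 hc' hfresh'
    have hfilterall : (Finset.univ.filter fun i : Fin s => 0 ≤ (i : ℕ)) = Finset.univ := by
      apply Finset.filter_true_of_mem
      intro i _
      omega
    refine ⟨l' ++ rest, B1, B2, ?_, ?_, ?_⟩
    · rw [B3, hsupp', hfilterall]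
      ext x
      simp only [Finset.mem_union, Finset.mem_singleton, Finset.mem_biUnion, Finset.mem_univ,
        true_and, mem_Cs, mem_SuppUpto]
      constructor
      · rintro (((⟨i, rfl⟩ | ⟨j, hj, rfl⟩ | ⟨i, j, hj, k, hk, rfl⟩) | rfl) | ⟨i, k, hk, rfl⟩)
        · exact Or.inl ⟨i, rfl⟩
        · exact Or.inr (Or.inl ⟨j, by omega, rfl⟩)
        · exact Or.inr (Or.inr ⟨i, j, by omega, k, hk, rfl⟩)
        · exact Or.inr (Or.inl ⟨jnew, by simp [hjnew], rfl⟩)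
        · exact Or.inr (Or.inr ⟨i, jnew, by simp [hjnew], k, hk, rfl⟩)
      · rintro (⟨i, rfl⟩ | ⟨j, hj, rfl⟩ | ⟨i, j, hj, k, hk, rfl⟩)
        · exact Or.inl (Or.inl (Or.inl ⟨i, rfl⟩))
        · by_cases hjn : (j : ℕ) < n
          · exact Or.inl (Or.inl (Or.inr (Or.inl ⟨j, hjn, rfl⟩)))
          · have : j = jnew := Fin.ext (by simp [hjnew] <;> omega)
            subst this
            exact Or.inl (Or.inr rfl)
        · by_cases hjn : (j : ℕ) < n
          · exact Or.inl (Or.inl (Or.inr (Or.inr ⟨i, j, hjn, k, hk, rfl⟩)))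
          · have : j = jnew := Fin.ext (by simp [hjnew] <;> omega)
            subst this
            exact Or.inr ⟨i, k, hk, rfl⟩
    · intro i j hj
      by_cases hjn : (j : ℕ) < n
      · exact List.mem_append_left _ (List.mem_append_left _ (hEe i j hjn))
      · have : j = jnew := Fin.ext (by simp [hjnew] <;> omega)
        subst this
        exact B4 i (by omega)
    · intro j hj
      have : j = jnew := Fin.ext (by simp [hjnew] <;> omega)
      subst this
      exact List.mem_append_left _ G4

end Outer

section Glue
open TT

lemma verts_toFinset {α : Type*} [DecidableEq α] (l : List (Finset α)) :
    verts l.toFinset = supp l := by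
  ext x
  rw [verts, Finset.mem_sup, mem_supp]
  simp only [List.mem_toFinset, id]

variable {s t : ℕ}

lemma expansion_eq (s t r : ℕ) :
    expansion r (completeBipartite s t)
      = Finset.univ.image (fun p : Fin s × Fin t => Ee r p.1 p.2) := by
  rw [expansion, completeBipartite, Finset.image_image]
  apply Finset.image_congr
  intro p _
  have hcard : ({Sum.inl p.1, Sum.inr p.2} : Finset (Fin s ⊕ Fin t)).card = 2 := by
    rw [Finset.card_insert_of_notMem (by simp), Finset.card_singleton]
  show ({Sum.inl p.1, Sum.inr p.2} : Finset (Fin s ⊕ Fin t)).image Sum.inl ∪ _ = _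
  rw [hcard, Finset.image_insert, Finset.image_singleton]
  rfl

lemma verts_expansion (s t r : ℕ) (hs0 : 0 < s) (ht : 0 < t) :
    verts (Finset.univ.image (fun p : Fin s × Fin t => Ee r p.1 p.2))
      = SuppUpto s t r t := by
  ext x
  rw [verts, Finset.mem_sup, mem_SuppUpto]
  constructor
  · rintro ⟨e, he, hx⟩
    obtain ⟨p, -, rfl⟩ := Finset.mem_image.mp he
    rw [id, mem_Ee] at hx
    rcases hx with rfl | rfl | ⟨k, hk, rfl⟩
    · exact Or.inl ⟨p.1, rfl⟩
    · exact Or.inr (Or.inl ⟨p.2, p.2.isLt, rfl⟩)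
    · exact Or.inr (Or.inr ⟨p.1, p.2, p.2.isLt, k, hk, rfl⟩)
  · rintro (⟨i, rfl⟩ | ⟨j, -, rfl⟩ | ⟨i, j, -, k, hk, rfl⟩)
    · refine ⟨Ee r i ⟨0, ht⟩, Finset.mem_image.mpr ⟨(i, ⟨0, ht⟩), Finset.mem_univ _, rfl⟩, ?_⟩
      rw [id, mem_Ee]
      exact Or.inl rfl
    · refine ⟨Ee r ⟨0, hs0⟩ j, Finset.mem_image.mpr ⟨(⟨0, hs0⟩, j), Finset.mem_univ _, rfl⟩, ?_⟩
      rw [id, mem_Ee]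
      exact Or.inr (Or.inl rfl)
    · refine ⟨Ee r i j, Finset.mem_image.mpr ⟨(i, j), Finset.mem_univ _, rfl⟩, ?_⟩
      rw [id, mem_Ee]
      exact Or.inr (Or.inr ⟨k, hk, rfl⟩)

end Glue

end ST

/-- `K_{s,t}^{(r)}` is a spanning subgraph of a tight `r`-tree for
`r ≥ s + 1`. -/
theorem stmt_18 (s t r : ℕ) (hs : 2 ≤ s) (hst : s ≤ t) (hr : s + 1 ≤ r) :
    IsSpanningSubgraphOfTightTree r (expansion r (completeBipartite s t)) := by
  obtain ⟨l, hG, hc, hsupp, hEe, -⟩ :=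
    ST.outer s t r (by omega) hs (by omega) hr t (by omega) le_rfl
  refine ⟨l.toFinset, ⟨fun e he => hc e (List.mem_toFinset.mp he),
    l, TT.good_nodup hG, rfl, hG⟩, ?_, ?_⟩
  · rw [ST.expansion_eq]
    intro e he
    obtain ⟨p, -, rfl⟩ := Finset.mem_image.mp he
    exact List.mem_toFinset.mpr (hEe p.1 p.2 p.2.isLt)
  · rw [ST.verts_toFinset, hsupp, ST.expansion_eq,
      ST.verts_expansion s t r (by omega) (by omega)]
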